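/- Suppose K_l^l > 0 for every l = 2,...,m, where K_l^l is the recursively defined quantity associated with the leading l×l submatrix of A. Then every leading principal minor of A is positive, det[l] > 0 for l = 1,...,m, and consequently the symmetric matrix A is positive definite. -/

import Mathlib

open Real Matrix Finset

/-- `leadingMinor A k` is the `k`-th leading principal minor of `A` (the determinant of
the top-left `k × k` submatrix), with junk value `0` when `k > m`. -/
noncomputable def leadingMinor {m : ℕ} (A : Matrix (Fin m) (Fin m) ℝ) (k : ℕ) : ℝ :=
  if h : k ≤ m then (A.submatrix (Fin.castLE h) (Fin.castLE h)).det else 0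


section Aux

/-! ### Desnanot–Jacobi identity -/

/-- Delete index `n` (keep `0..n-1` and `n+1`). -/
def dja (n : ℕ) : Fin (n + 1) → Fin (n + 2) := fun i =>
  if (i : ℕ) < n then ⟨i, by omega⟩ else ⟨n + 1, by omega⟩

/-- Delete index `n+1` (keep `0..n`). -/
def djb (n : ℕ) : Fin (n + 1) → Fin (n + 2) := fun i => ⟨i, by omega⟩

/-- Keep `0..n-1`. -/
def djc (n : ℕ) : Fin n → Fin (n + 2) := fun i => ⟨i, by omega⟩

lemma key_block {R : Type*} [CommRing R] (n : ℕ) (M : Matrix (Fin (n + 2)) (Fin (n + 2)) R) :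
    M.det * ((adjugate M).submatrix (fun i : Fin 2 => finSumFinEquiv (Sum.inr i))
        (fun i : Fin 2 => finSumFinEquiv (Sum.inr i))).det
      = (M.submatrix (fun i : Fin n => finSumFinEquiv (Sum.inl i))
        (fun i : Fin n => finSumFinEquiv (Sum.inl i))).det * M.det ^ 2 := by
  set e : Fin n ⊕ Fin 2 ≃ Fin (n + 2) := finSumFinEquiv with he
  set M' := M.submatrix e e with hM'
  set A' := (adjugate M).submatrix e e with hA'
  have hMA : M' * A' = M.det • 1 := by
    rw [hM', hA', submatrix_mul_equiv, mul_adjugate]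
    ext i j
    simp [Matrix.one_apply, Equiv.eq_symm_apply]
  have hMA' : fromBlocks M'.toBlocks₁₁ M'.toBlocks₁₂ M'.toBlocks₂₁ M'.toBlocks₂₂ *
      fromBlocks A'.toBlocks₁₁ A'.toBlocks₁₂ A'.toBlocks₂₁ A'.toBlocks₂₂
        = fromBlocks (M.det • 1) 0 0 (M.det • 1) := by
    rw [fromBlocks_toBlocks, fromBlocks_toBlocks, hMA, ← fromBlocks_one, fromBlocks_smul]
    simp
  rw [fromBlocks_multiply] at hMA'
  have h12 : M'.toBlocks₁₁ * A'.toBlocks₁₂ + M'.toBlocks₁₂ * A'.toBlocks₂₂ = 0 := by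
    have := congrArg Matrix.toBlocks₁₂ hMA'
    simpa using this
  have h22 : M'.toBlocks₂₁ * A'.toBlocks₁₂ + M'.toBlocks₂₂ * A'.toBlocks₂₂ = M.det • 1 := by
    have := congrArg Matrix.toBlocks₂₂ hMA'
    simpa using this
  have hprod : M' * fromBlocks 1 A'.toBlocks₁₂ 0 A'.toBlocks₂₂
      = fromBlocks M'.toBlocks₁₁ 0 M'.toBlocks₂₁ (M.det • 1) := by
    conv_lhs => rw [← fromBlocks_toBlocks M']
    rw [fromBlocks_multiply]
    rw [Matrix.mul_one, Matrix.mul_one, Matrix.mul_zero, Matrix.mul_zero, add_zero, add_zero,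
      h12, h22]
  have hdet := congrArg Matrix.det hprod
  rw [det_mul, det_fromBlocks_zero₂₁, det_fromBlocks_zero₁₂, det_one, one_mul] at hdet
  have hM'det : M'.det = M.det := det_submatrix_equiv_self e M
  have hsmul : (M.det • (1 : Matrix (Fin 2) (Fin 2) R)).det = M.det ^ 2 := by
    simp [det_smul]
  rw [hM'det, hsmul] at hdet
  exact hdet

lemma jacobi_corner {R : Type*} [CommRing R] (n : ℕ)
    (M : Matrix (Fin (n + 2)) (Fin (n + 2)) R) :
    ((adjugate M).submatrix (fun i : Fin 2 => finSumFinEquiv (Sum.inr i))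
        (fun i : Fin 2 => finSumFinEquiv (Sum.inr i))).det
      = M.det * (M.submatrix (fun i : Fin n => finSumFinEquiv (Sum.inl i))
        (fun i : Fin n => finSumFinEquiv (Sum.inl i))).det := by
  let A' := mvPolynomialX (Fin (n + 2)) (Fin (n + 2)) ℤ
  suffices h : ((adjugate A').submatrix (fun i : Fin 2 => finSumFinEquiv (Sum.inr i))
        (fun i : Fin 2 => finSumFinEquiv (Sum.inr i))).det
      = A'.det * (A'.submatrix (fun i : Fin n => finSumFinEquiv (Sum.inl i))
        (fun i : Fin n => finSumFinEquiv (Sum.inl i))).det by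
    let f := MvPolynomial.aeval (R := ℤ) fun p : Fin (n + 2) × Fin (n + 2) => M p.1 p.2
    have hM : f.mapMatrix A' = M := mvPolynomialX_mapMatrix_aeval ℤ M
    have hsub : ∀ {k : ℕ} (X : Matrix (Fin (n + 2)) (Fin (n + 2))
        (MvPolynomial (Fin (n + 2) × Fin (n + 2)) ℤ)) (a b : Fin k → Fin (n + 2)),
        (f.mapMatrix X).submatrix a b = f.mapMatrix (X.submatrix a b) := fun _ _ _ => rfl
    rw [show M = f.mapMatrix A' from hM.symm, ← AlgHom.map_adjugate, hsub, hsub,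
      ← AlgHom.map_det, ← AlgHom.map_det, ← AlgHom.map_det, ← _root_.map_mul]
    exact congrArg f h
  have hd : A'.det ≠ 0 := det_mvPolynomialX_ne_zero _ ℤ
  apply mul_left_cancel₀ hd
  rw [key_block]
  ring

/-- Desnanot–Jacobi identity for a symmetric matrix, deleting the last two indices. -/
lemma desnanot_jacobi (n : ℕ) (M : Matrix (Fin (n + 2)) (Fin (n + 2)) ℝ) (hs : Mᵀ = M) :
    (M.submatrix (dja n) (dja n)).det * (M.submatrix (djb n) (djb n)).det
        - (M.submatrix (djb n) (dja n)).det ^ 2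
      = M.det * (M.submatrix (djc n) (djc n)).det := by
  have hc : (fun i : Fin n => finSumFinEquiv (Sum.inl i)) = djc n := by
    funext i; apply Fin.ext; simp [djc]
  have h := jacobi_corner n M
  rw [hc] at h
  rw [← h]
  have hx : finSumFinEquiv (Sum.inr (0 : Fin 2)) = (⟨n, by omega⟩ : Fin (n + 2)) := by
    apply Fin.ext; simp
  have hy : finSumFinEquiv (Sum.inr (1 : Fin 2)) = (⟨n + 1, by omega⟩ : Fin (n + 2)) := by
    apply Fin.ext; simp
  have hsa : (⟨n, by omega⟩ : Fin (n + 2)).succAbove = dja n := by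
    funext i
    by_cases hi : (i : ℕ) < n
    · apply Fin.ext
      simp [Fin.succAbove, Fin.lt_def, hi, dja]
    · apply Fin.ext
      have : (i : ℕ) = n := by omega
      simp [Fin.succAbove, Fin.lt_def, hi, dja, this]
  have hsb : (⟨n + 1, by omega⟩ : Fin (n + 2)).succAbove = djb n := by
    have : (⟨n + 1, by omega⟩ : Fin (n + 2)) = Fin.last (n + 1) := rfl
    rw [this, Fin.succAbove_last]
    funext i; apply Fin.ext; simp [djb]
  have hadj : ∀ i j : Fin (n + 2), adjugate M i j
      = (-1 : ℝ) ^ ((j : ℕ) + (i : ℕ)) * (M.submatrix (j.succAbove) (i.succAbove)).det :=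
    fun i j => adjugate_fin_succ_eq_det_submatrix M i j
  rw [det_fin_two]
  simp only [submatrix_apply, hx, hy, hadj, hsa, hsb]
  have hba : (M.submatrix (dja n) (djb n)).det = (M.submatrix (djb n) (dja n)).det := by
    rw [← det_transpose, transpose_submatrix, hs]
  rw [hba]
  have h4 : ((-1 : ℝ)) ^ (n * 4) = 1 := by
    rw [show n * 4 = 2 * (2 * n) by ring, pow_mul]; norm_num
  ring_nf
  rw [h4]
  ring

/-! ### Sylvester's criterion -/

lemma posSemidef_fin_one {d : Matrix (Fin 1) (Fin 1) ℝ} (h : 0 ≤ d 0 0) : d.PosSemidef := by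
  refine posSemidef_iff_dotProduct_mulVec.mpr ⟨?_, fun x => ?_⟩
  · ext i j
    fin_cases i; fin_cases j
    simp [Matrix.conjTranspose_apply]
  · have : star x ⬝ᵥ d *ᵥ x = d 0 0 * (x 0 * x 0) := by
      simp [dotProduct, mulVec, Fin.sum_univ_one]
      ring
    rw [this]
    nlinarith [mul_self_nonneg (x 0)]

lemma sylvester_criterion : ∀ (n : ℕ) (A : Matrix (Fin n) (Fin n) ℝ), Aᵀ = A →
    (∀ k, 1 ≤ k → k ≤ n → 0 < leadingMinor A k) → A.PosDef := by
  intro n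
  induction n with
  | zero =>
    intro A hs _
    refine ⟨?_, fun x hx => absurd (Finsupp.ext fun i => i.elim0) hx⟩
    ext i j; exact i.elim0
  | succ n ih =>
    intro A hs hmin
    have hherm : A.IsHermitian := by
      have : Aᴴ = Aᵀ := by ext i j; simp [Matrix.conjTranspose_apply]
      rw [Matrix.IsHermitian, this, hs]
    set B := A.submatrix Fin.castSucc Fin.castSucc with hBdef
    have hsa : ∀ i j, A i j = A j i := fun i j => by
      conv_lhs => rw [← hs, transpose_apply]
    have hBs : Bᵀ = B := by
      ext i j; exact hsa _ _
    have hlmB : ∀ k (hk : k ≤ n), leadingMinor B k = leadingMinor A k := by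
      intro k hk
      rw [leadingMinor, leadingMinor, dif_pos hk, dif_pos (by omega : k ≤ n + 1)]
      congr 1
    have hB : B.PosDef := ih B hBs fun k h1 h2 => (hlmB k h2) ▸ hmin k h1 (by omega)
    have hdetA : 0 < A.det := by
      have := hmin (n + 1) (by omega) le_rfl
      rwa [leadingMinor, dif_pos le_rfl, show Fin.castLE (le_refl (n+1)) = id from
        funext fun i => Fin.ext rfl, submatrix_id_id] at this
    set e : Fin n ⊕ Fin 1 ≃ Fin (n + 1) := finSumFinEquiv with he
    set c : Matrix (Fin n) (Fin 1) ℝ := of fun i _ => A i.castSucc (Fin.last n) with hc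
    set d : Matrix (Fin 1) (Fin 1) ℝ := of fun _ _ => A (Fin.last n) (Fin.last n) with hd
    have hel : ∀ i : Fin n, e (Sum.inl i) = i.castSucc := fun i => Fin.ext (by simp [he])
    have hAe : A.submatrix e e = fromBlocks B c cᴴ d := by
      ext i j
      cases i with
      | inl i =>
        cases j with
        | inl j => rfl
        | inr j =>
          have : e (Sum.inr j) = Fin.last n := by
            apply Fin.ext; simp [he, Fin.fin_one_eq_zero j]
          simp [fromBlocks, this, hc, hel]
      | inr i =>
        have hi : e (Sum.inr i) = Fin.last n := by
          apply Fin.ext; simp [he, Fin.fin_one_eq_zero i]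
        cases j with
        | inl j =>
          simp [fromBlocks, hi, hc, Matrix.conjTranspose_apply, hel, hsa]
        | inr j =>
          have hj : e (Sum.inr j) = Fin.last n := by
            apply Fin.ext; simp [he, Fin.fin_one_eq_zero j]
          simp [fromBlocks, hi, hj, hd]
    haveI : Invertible B := B.invertibleOfIsUnitDet (isUnit_iff_ne_zero.mpr hB.det_pos.ne')
    have hdetB : 0 < B.det := hB.det_pos
    have hdetblocks : A.det = B.det * (d - cᴴ * ⅟B * c).det := by
      rw [← det_submatrix_equiv_self e A, hAe, det_fromBlocks₁₁]
    have hSpos : 0 ≤ (d - cᴴ * ⅟B * c) 0 0 := by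
      have h1 : (d - cᴴ * ⅟B * c).det = A.det / B.det := by
        rw [hdetblocks]; field_simp
      have h2 : (d - cᴴ * ⅟B * c).det = (d - cᴴ * ⅟B * c) 0 0 := det_fin_one _
      rw [h2] at h1
      rw [h1]
      positivity
    have hPS : A.PosSemidef := by
      have := (PosDef.fromBlocks₁₁ c d hB).mpr ?_
      · rw [← hAe] at this
        exact (posSemidef_submatrix_equiv e).mp this
      · have : cᴴ * B⁻¹ * c = cᴴ * ⅟B * c := by rw [invOf_eq_nonsing_inv]
        rw [this]
        exact posSemidef_fin_one hSpos
    refine posDef_iff_dotProduct_mulVec.mpr ⟨hherm, fun x hx => ?_⟩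
    rcases lt_or_eq_of_le (hPS.dotProduct_mulVec_nonneg x) with h | h
    · exact h
    · exfalso
      have h0 : A *ᵥ x = 0 := (hPS.dotProduct_mulVec_zero_iff x).mp h.symm
      have : x = 0 := by
        haveI := A.invertibleOfIsUnitDet (isUnit_iff_ne_zero.mpr hdetA.ne')
        exact Matrix.mulVec_injective_of_invertible A (a₁ := x) (a₂ := 0) (by simpa using h0)
      exact hx this

/-! ### The bordered-submatrix identity for `K` -/

/-- The map selecting rows `0, ..., l-2, j-1` of an `m × m` matrix. -/
def rmap {m : ℕ} (j l : ℕ) (h0 : 1 ≤ j) (h1 : l ≤ j) (h2 : j ≤ m) : Fin l → Fin m :=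
  fun i => if (i : ℕ) < l - 1 then ⟨i, by have := i.isLt; omega⟩ else ⟨j - 1, by omega⟩

lemma K_eq {m : ℕ} (hm : 2 ≤ m) (A : Matrix (Fin m) (Fin m) ℝ) (hsa : ∀ i j, A i j = A j i)
    (K H : ℕ → ℕ → ℝ)
    (hK2 : ∀ j, 2 ≤ j → ∀ hj : j ≤ m,
      K j 2 = A ⟨0, by have := hsa; omega⟩ ⟨0, by have := hsa; omega⟩ * A ⟨j - 1, by have := hsa; omega⟩ ⟨j - 1, by have := hsa; omega⟩ -
        (A ⟨0, by have := hsa; omega⟩ ⟨j - 1, by have := hsa; omega⟩) ^ 2)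
    (hH2 : ∀ j, 2 ≤ j → ∀ hj : j ≤ m,
      H j 2 = A ⟨0, by have := hsa; omega⟩ ⟨0, by have := hsa; omega⟩ * A ⟨1, by have := hsa; omega⟩ ⟨j - 1, by have := hsa; omega⟩ -
        A ⟨0, by have := hsa; omega⟩ ⟨1, by have := hsa; omega⟩ * A ⟨0, by have := hsa; omega⟩ ⟨j - 1, by have := hsa; omega⟩)
    (hKrec : ∀ j l, 3 ≤ l → l ≤ j → j ≤ m →
      K j l = K (l - 1) (l - 1) * K j (l - 1) - (H j (l - 1)) ^ 2)
    (hHrec : ∀ j l, ∀ _h3 : 3 ≤ l, ∀ _hjl : l ≤ j - 1, ∀ hj : j ≤ m,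
      H j l = (A.submatrix
          (fun i : Fin l => (⟨(i : ℕ), by have := i.isLt; exact Nat.lt_of_lt_of_le this (by omega)⟩ : Fin m))
          (fun i : Fin l => if (i : ℕ) < l - 1 then
              (⟨(i : ℕ), by have := i.isLt; exact Nat.lt_of_lt_of_le this (by omega)⟩ : Fin m)
            else (⟨j - 1, by have := hsa; omega⟩ : Fin m))).det *
        ∏ k ∈ Finset.Icc 1 (l - 2), (leadingMinor A k) ^ (2 ^ (l - k - 2))) :
    ∀ l, ∀ _hl : 2 ≤ l, ∀ j, ∀ h1 : l ≤ j, ∀ h2 : j ≤ m,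
      K j l = (A.submatrix (rmap j l (by omega) h1 h2) (rmap j l (by omega) h1 h2)).det *
        ∏ k ∈ Finset.Icc 1 (l - 2), (leadingMinor A k) ^ (2 ^ (l - k - 2)) := by
  intro l hl
  induction l, hl using Nat.le_induction with
  | base =>
    intro j h1 h2
    suffices hgoal : K j 2 =
        (A.submatrix (rmap j 2 (by omega) h1 h2) (rmap j 2 (by omega) h1 h2)).det *
          ∏ k ∈ Finset.Icc 1 (2 - 2), (leadingMinor A k) ^ (2 ^ (2 - k - 2)) from hgoal
    rw [hK2 j h1 h2, det_fin_two]
    have e0 : rmap j 2 (by omega) h1 h2 0 = (⟨0, by omega⟩ : Fin m) := by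
      simp [rmap]
    have e1 : rmap j 2 (by omega) h1 h2 1 = (⟨j - 1, by omega⟩ : Fin m) := by
      simp [rmap]
    rw [show Finset.Icc 1 (2 - 2) = ∅ by simp, Finset.prod_empty, mul_one]
    simp only [submatrix_apply, e0, e1]
    rw [hsa ⟨j - 1, by omega⟩ ⟨0, by omega⟩]
    ring
  | succ l hl ih =>
    obtain ⟨s, rfl⟩ : ∃ s, l = s + 2 := ⟨l - 2, by omega⟩
    intro j h1 h2
    have h0j : 1 ≤ j := by omega
    have hsj : s + 2 ≤ j := by omega
    have hs2m : s + 2 ≤ m := by omega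
    have hs1m : s + 1 ≤ m := by omega
    -- canonical maps
    set R : Fin (s + 3) → Fin m := rmap j (s + 3) (by omega) (by omega) h2 with hR
    set ra : Fin (s + 2) → Fin m := rmap j (s + 2) h0j hsj h2 with hra0
    set rb : Fin (s + 2) → Fin m :=
      (fun i : Fin (s + 2) => (⟨(i : ℕ), by have := i.isLt; omega⟩ : Fin m)) with hrb0
    set M : Matrix (Fin (s + 3)) (Fin (s + 3)) ℝ := A.submatrix R R with hM
    set Ps : ℝ := ∏ k ∈ Finset.Icc 1 (s + 2 - 2), (leadingMinor A k) ^ (2 ^ (s + 2 - k - 2))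
      with hPs
    suffices hgoal : K j (s + 2 + 1) = M.det *
        ∏ k ∈ Finset.Icc 1 (s + 2 + 1 - 2), (leadingMinor A k) ^ (2 ^ (s + 2 + 1 - k - 2)) from
      hgoal
    -- the Desnanot–Jacobi identity for M
    have hMs : Mᵀ = M := by
      ext i j; exact hsa _ _
    have hcra : R ∘ dja (s + 1) = ra := by
      funext i
      apply Fin.ext
      have hi2 : (i : ℕ) < s + 2 := i.isLt
      by_cases hi : (i : ℕ) < s + 1
      · simp [hR, hra0, rmap, dja, hi, Fin.val_mk,
          show (i : ℕ) < s + 3 - 1 by omega, show (i : ℕ) < s + 2 - 1 by omega]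
      · simp [hR, hra0, rmap, dja, hi, Fin.val_mk,
          show ¬(s + 1 + 1 < s + 3 - 1) by omega, show ¬((i : ℕ) < s + 2 - 1) by omega]
    have hcrb : R ∘ djb (s + 1) = rb := by
      funext i
      apply Fin.ext
      have hi2 : (i : ℕ) < s + 2 := i.isLt
      simp [hR, hrb0, rmap, djb, Fin.val_mk, show (i : ℕ) < s + 3 - 1 by omega]
    have hcrc : R ∘ djc (s + 1) = Fin.castLE hs1m := by
      funext i
      apply Fin.ext
      have hi : (i : ℕ) < s + 1 := i.isLt
      simp [hR, rmap, djc, Fin.val_mk, Fin.coe_castLE, show (i : ℕ) < s + 3 - 1 by omega,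
        show (i : ℕ) < s + 2 by omega]
    have hlm1 : leadingMinor A (s + 1) = (A.submatrix (Fin.castLE hs1m)
        (Fin.castLE hs1m)).det := by
      rw [leadingMinor, dif_pos hs1m]
    have hdj := desnanot_jacobi (s + 1) M hMs
    rw [hM, submatrix_submatrix, submatrix_submatrix, submatrix_submatrix, submatrix_submatrix,
      hcra, hcrb, hcrc, ← hM, ← hlm1] at hdj
    -- hdj : (A.submatrix ra ra).det * (A.submatrix rb rb).det - (A.submatrix rb ra).det ^ 2
    --     = M.det * leadingMinor A (s + 1)
    -- the three recursion ingredients, in canonical form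
    have hKjl : K j (s + 2) = (A.submatrix ra ra).det * Ps := ih j hsj h2
    have hKll : K (s + 2) (s + 2) = (A.submatrix rb rb).det * Ps := by
      have h' : K (s + 2) (s + 2) =
          (A.submatrix (rmap (s + 2) (s + 2) (by omega) le_rfl hs2m)
            (rmap (s + 2) (s + 2) (by omega) le_rfl hs2m)).det * Ps := ih (s + 2) le_rfl hs2m
      have heq : rmap (s + 2) (s + 2) (by omega) le_rfl hs2m = rb := by
        funext i
        apply Fin.ext
        have hi2 : (i : ℕ) < s + 2 := i.isLt
        by_cases h : (i : ℕ) < s + 2 - 1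
        · simp [rmap, hrb0, h, Fin.val_mk, show (i : ℕ) < s + 1 by omega]
        · simp [rmap, hrb0, h, Fin.val_mk, show ¬((i : ℕ) < s + 1) by omega]
          omega
      rwa [heq] at h'
    have hHjl : H j (s + 2) = (A.submatrix rb ra).det * Ps := by
      rcases Nat.eq_or_lt_of_le (by omega : 1 ≤ s + 1) with hs0 | hs1
      · -- s = 0 : use hH2
        obtain rfl : s = 0 := by omega
        have hPs1 : Ps = 1 := by
          rw [hPs, show Finset.Icc 1 (0 + 2 - 2) = ∅ by simp, Finset.prod_empty]
        rw [hH2 j (by omega) h2, det_fin_two, hPs1, mul_one]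
        have e0 : ra 0 = (⟨0, by omega⟩ : Fin m) := by simp [hra0, rmap]
        have e1 : ra 1 = (⟨j - 1, by omega⟩ : Fin m) := by simp [hra0, rmap]
        have f0 : rb 0 = (⟨0, by omega⟩ : Fin m) := by simp [hrb0]
        have f1 : rb 1 = (⟨1, by omega⟩ : Fin m) := by simp [hrb0]
        simp only [submatrix_apply, e0, e1, f0, f1]
        rw [hsa ⟨1, by omega⟩ ⟨0, by omega⟩]
        ring
      · -- s ≥ 1 : use hHrec
        exact hHrec j (s + 2) (by omega) (by omega) h2
    -- assemble
    have hKrw := hKrec j (s + 2 + 1) (by omega) (by omega) h2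
    rw [show s + 2 + 1 - 1 = s + 2 from rfl] at hKrw
    rw [hKrw, hKjl, hKll, hHjl]
    -- rewrite the target product
    have hPP : ∏ k ∈ Finset.Icc 1 (s + 2 + 1 - 2), (leadingMinor A k) ^ (2 ^ (s + 2 + 1 - k - 2))
        = Ps ^ 2 * leadingMinor A (s + 1) := by
      have htop : ∏ k ∈ Finset.Icc 1 (s + 2 + 1 - 2),
          (leadingMinor A k) ^ (2 ^ (s + 2 + 1 - k - 2))
          = (∏ k ∈ Finset.Icc 1 s, (leadingMinor A k) ^ (2 ^ (s + 2 + 1 - k - 2))) *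
            (leadingMinor A (s + 1)) ^ (2 ^ (s + 2 + 1 - (s + 1) - 2)) := by
        rw [show s + 2 + 1 - 2 = s + 1 from rfl]
        exact Finset.prod_Icc_succ_top (by omega) _
      rw [htop, show s + 2 + 1 - (s + 1) - 2 = 0 by omega, pow_zero, pow_one]
      congr 1
      rw [hPs, show s + 2 - 2 = s from rfl, ← Finset.prod_pow]
      refine Finset.prod_congr rfl fun k hk => ?_
      rw [← pow_mul]
      congr 1
      have hk' := (Finset.mem_Icc.mp hk).2
      rw [show 2 ^ (s + 2 - k - 2) * 2 = 2 ^ (s + 2 - k - 2 + 1) by rw [pow_succ]]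
      congr 1
      omega
    rw [hPP]
    linear_combination Ps ^ 2 * hdj

end Aux

/-- For the symmetric matrix `A = (a_{ℓκ})` built from the positive
`λ`'s and `θ`'s and the nonnegative integers `p_k`, if `K_l^l > 0` for every
`l = 2, ..., m` (where `K j l`, `H j l` denote the paper's recursively defined
quantities for the leading `j × j` submatrix), then every leading principal minor of `A`
is positive, `det[l] > 0` for `l = 1, ..., m`, and consequently `A` is positive
definite.  Indices are `0`-based: the paper's `a_{ℓκ}` is `A ⟨ℓ-1,_⟩ ⟨κ-1,_⟩`, the
paper's `λ_ℓ` is `lam ⟨ℓ-1,_⟩`, and the paper's `θ_k`, `p_k` are `θ ⟨k-1,_⟩`,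
`p ⟨k-1,_⟩`. -/
theorem stmt11 (m : ℕ) (hm : 2 ≤ m)
    (lam : Fin m → ℝ) (hlam : ∀ ℓ, 0 < lam ℓ)
    (θ : Fin (m - 1) → ℝ) (hθ : ∀ k, 0 < θ k)
    (p : Fin (m - 1) → ℕ)
    (A : Matrix (Fin m) (Fin m) ℝ)
    (hA : ∀ ℓ κ : Fin m, A ℓ κ =
      ((lam ℓ + lam κ) / 2) *
        ∏ k : Fin (m - 1),
          θ k ^ (if (k : ℕ) < min (ℓ : ℕ) (κ : ℕ) then (p k) ^ 2
            else if (k : ℕ) < max (ℓ : ℕ) (κ : ℕ) then (p k + 1) ^ 2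
            else (p k + 2) ^ 2))
    (K H : ℕ → ℕ → ℝ)
    (hK2 : ∀ j, 2 ≤ j → ∀ hj : j ≤ m,
      K j 2 = A ⟨0, by omega⟩ ⟨0, by omega⟩ * A ⟨j - 1, by omega⟩ ⟨j - 1, by omega⟩ -
        (A ⟨0, by omega⟩ ⟨j - 1, by omega⟩) ^ 2)
    (hH2 : ∀ j, 2 ≤ j → ∀ hj : j ≤ m,
      H j 2 = A ⟨0, by omega⟩ ⟨0, by omega⟩ * A ⟨1, by omega⟩ ⟨j - 1, by omega⟩ -
        A ⟨0, by omega⟩ ⟨1, by omega⟩ * A ⟨0, by omega⟩ ⟨j - 1, by omega⟩)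
    (hKrec : ∀ j l, 3 ≤ l → l ≤ j → j ≤ m →
      K j l = K (l - 1) (l - 1) * K j (l - 1) - (H j (l - 1)) ^ 2)
    (hHrec : ∀ j l, ∀ _h3 : 3 ≤ l, ∀ _hjl : l ≤ j - 1, ∀ hj : j ≤ m,
      H j l = (A.submatrix
          (fun i : Fin l => (⟨(i : ℕ), by have := i.isLt; omega⟩ : Fin m))
          (fun i : Fin l => if (i : ℕ) < l - 1 then
              (⟨(i : ℕ), by have := i.isLt; omega⟩ : Fin m)
            else (⟨j - 1, by omega⟩ : Fin m))).det *
        ∏ k ∈ Finset.Icc 1 (l - 2), (leadingMinor A k) ^ (2 ^ (l - k - 2)))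
    (hKpos : ∀ l, 2 ≤ l → l ≤ m → 0 < K l l) :
    (∀ l, 1 ≤ l → l ≤ m → 0 < leadingMinor A l) ∧ A.PosDef := by
  have hsa : ∀ i j, A i j = A j i := by
    intro i j
    rw [hA i j, hA j i]
    have h1 : min (i : ℕ) (j : ℕ) = min (j : ℕ) (i : ℕ) := min_comm _ _
    have h2 : max (i : ℕ) (j : ℕ) = max (j : ℕ) (i : ℕ) := max_comm _ _
    rw [h1, h2, add_comm (lam i)]
  have hAt : Aᵀ = A := by
    ext i j
    rw [transpose_apply]
    exact hsa j i
  have h1m : 1 ≤ m := by omega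
  have hpos1 : 0 < leadingMinor A 1 := by
    rw [leadingMinor, dif_pos h1m, det_fin_one, submatrix_apply, hA]
    have := hlam (Fin.castLE h1m 0)
    exact mul_pos (by linarith) (Finset.prod_pos fun k _ => pow_pos (hθ k) _)
  have hKeq := K_eq hm A hsa K H hK2 hH2 hKrec hHrec
  have hKll : ∀ l, ∀ _h2l : 2 ≤ l, ∀ hlm : l ≤ m, K l l = leadingMinor A l *
      ∏ k ∈ Finset.Icc 1 (l - 2), (leadingMinor A k) ^ (2 ^ (l - k - 2)) := by
    intro l h2l hlm
    have h := hKeq l h2l l le_rfl hlm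
    have hre : rmap l l (by omega) le_rfl hlm = Fin.castLE hlm := by
      funext i
      apply Fin.ext
      have hi : (i : ℕ) < l := i.isLt
      by_cases hil : (i : ℕ) < l - 1
      · simp [rmap, hil, Fin.val_mk]
      · simp [rmap, hil, Fin.val_mk]
        omega
    rw [hre] at h
    rw [h, leadingMinor, dif_pos hlm]
  have hlmpos : ∀ l, 1 ≤ l → l ≤ m → 0 < leadingMinor A l := by
    intro l
    induction l using Nat.strong_induction_on with
    | _ l ihl =>
      intro hl1 hlm
      rcases eq_or_lt_of_le hl1 with hl | hl
      · rw [← hl]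
        exact hpos1
      · have h2l : 2 ≤ l := hl
        have hPpos : 0 < ∏ k ∈ Finset.Icc 1 (l - 2), (leadingMinor A k) ^ (2 ^ (l - k - 2)) :=
          Finset.prod_pos fun k hk => by
            have hk' := Finset.mem_Icc.mp hk
            exact pow_pos (ihl k (by omega) hk'.1 (by omega)) _
        have hK := hKpos l h2l hlm
        rw [hKll l h2l hlm] at hK
        by_contra hx
        push_neg at hx
        nlinarith
  exact ⟨hlmpos, sylvester_criterion m A hAt hlmpos⟩
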